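/- arXiv:2212.02792 — 7 statements merged into one kernel-verified Lean document; each statement's English description precedes it below -/
import Mathlib

section
/- Let X be a complex Hilbert space, D : X →L[ℂ] X bounded, and α, β ∈ ℂ with αβ ∉ (-∞, 0]. Then the block operator A = [[α·I, -D*], [D, β·I]] on X × X is boundedly invertible, with inverse given by [[β·I, D*], [-D, α·I]] · diag((αβ + D*D)⁻¹, (αβ + DD*)⁻¹). -/
open ContinuousLinearMap

lemma aux_isUnit {X : Type*} [NormedAddCommGroup X] [InnerProductSpace ℂ X] [CompleteSpace X]
    (T : X →L[ℂ] X) (hT : 0 ≤ T) (α β : ℂ)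
    (h : ∀ t : ℝ, t ≤ 0 → α * β ≠ (t : ℂ)) :
    IsUnit ((α * β) • (1 : X →L[ℂ] X) + T) := by
  by_contra hu
  have hmem : -(α * β) ∈ spectrum ℂ T := by
    rw [spectrum.mem_iff]
    intro hu'
    apply hu
    have : (algebraMap ℂ (X →L[ℂ] X)) (-(α * β)) - T = -((α * β) • 1 + T) := by
      rw [Algebra.algebraMap_eq_smul_one]
      abel_nf
      simp [neg_smul]
      abel
    rw [this] at hu'
    simpa using hu'.neg
  have hsa : IsSelfAdjoint T := .of_nonneg hT
  have hre : -(α * β) = ((-(α * β)).re : ℂ) := hsa.mem_spectrum_eq_re hmem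
  have hre_mem : ((-(α * β)).re : ℝ) ∈ spectrum ℝ T := by
    have := hre ▸ hmem
    exact spectrum.of_algebraMap_mem ℂ this
  have hnn : (0 : ℝ) ≤ (-(α * β)).re := spectrum_nonneg_of_nonneg hT hre_mem
  exact h (-(-(α * β)).re) (by linarith) (by
    have := hre
    push_cast
    rw [← neg_eq_iff_eq_neg]
    exact_mod_cast this)

/-- Block operator inversion: if `αβ ∉ (-∞,0]`, then `A = [[α,-D*],[D,β]]` on `X × X`
is boundedly invertible, with inverse `[[β,D*],[-D,α]] · diag((αβ+D*D)⁻¹,(αβ+DD*)⁻¹)`. -/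
theorem stmt1 {X : Type*} [NormedAddCommGroup X] [InnerProductSpace ℂ X] [CompleteSpace X]
    (D : X →L[ℂ] X) (α β : ℂ)
    (h : ∀ t : ℝ, t ≤ 0 → α * β ≠ (t : ℂ))
    (A : (X × X) →L[ℂ] (X × X))
    (hA : ∀ x₁ x₂ : X, A (x₁, x₂) =
      (α • x₁ - (ContinuousLinearMap.adjoint D) x₂, D x₁ + β • x₂)) :
    IsUnit ((α * β) • (1 : X →L[ℂ] X) + (ContinuousLinearMap.adjoint D) ∘L D) ∧
    IsUnit ((α * β) • (1 : X →L[ℂ] X) + D ∘L (ContinuousLinearMap.adjoint D)) ∧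
    ∀ M' N' : X →L[ℂ] X,
      (((α * β) • (1 : X →L[ℂ] X) + (ContinuousLinearMap.adjoint D) ∘L D) ∘L M' = 1 ∧
        M' ∘L ((α * β) • (1 : X →L[ℂ] X) + (ContinuousLinearMap.adjoint D) ∘L D) = 1) →
      (((α * β) • (1 : X →L[ℂ] X) + D ∘L (ContinuousLinearMap.adjoint D)) ∘L N' = 1 ∧
        N' ∘L ((α * β) • (1 : X →L[ℂ] X) + D ∘L (ContinuousLinearMap.adjoint D)) = 1) →
      ∀ B : (X × X) →L[ℂ] (X × X),
        (∀ y₁ y₂ : X, B (y₁, y₂) =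
          (β • (M' y₁) + (ContinuousLinearMap.adjoint D) (N' y₂),
            -(D (M' y₁)) + α • (N' y₂))) →
        A ∘L B = 1 ∧ B ∘L A = 1 := by
  set D' := ContinuousLinearMap.adjoint D with hD'
  refine ⟨?_, ?_, ?_⟩
  · have : D' ∘L D = star D * D := by rw [star_eq_adjoint]; rfl
    exact this ▸ aux_isUnit _ (star_mul_self_nonneg D) α β h
  · have : D ∘L D' = D * star D := by rw [star_eq_adjoint]; rfl
    exact this ▸ aux_isUnit _ (mul_star_self_nonneg D) α β h
  intro M' N' hM hN B hB
  -- operator-level commutation identities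
  have key : D ∘L ((α * β) • (1 : X →L[ℂ] X) + D' ∘L D)
      = ((α * β) • (1 : X →L[ℂ] X) + D ∘L D') ∘L D := by
    ext x; simp
  have key' : D' ∘L ((α * β) • (1 : X →L[ℂ] X) + D ∘L D')
      = ((α * β) • (1 : X →L[ℂ] X) + D' ∘L D) ∘L D' := by
    ext x; simp
  simp only [← ContinuousLinearMap.mul_def] at hM hN key key'
  have hND : N' * D = D * M' := by
    calc N' * D = N' * D * (((α * β) • 1 + D' * D) * M') := by rw [hM.1, mul_one]
      _ = N' * ((α * β) • 1 + D * D') * (D * M') := by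
          rw [← mul_assoc, ← mul_assoc, mul_assoc N', key, ← mul_assoc, mul_assoc]
      _ = D * M' := by rw [hN.2, one_mul]
  have hMD : M' * D' = D' * N' := by
    calc M' * D' = M' * D' * (((α * β) • 1 + D * D') * N') := by rw [hN.1, mul_one]
      _ = M' * ((α * β) • 1 + D' * D) * (D' * N') := by
          rw [← mul_assoc, ← mul_assoc, mul_assoc M', key', ← mul_assoc, mul_assoc]
      _ = D' * N' := by rw [hM.2, one_mul]
  -- pointwise versions
  have hM1 : ∀ x : X, (α * β) • M' x + D' (D (M' x)) = x := by
    intro x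
    have := congrArg (fun f : X →L[ℂ] X => f x) hM.1
    simpa [ContinuousLinearMap.mul_apply] using this
  have hN1 : ∀ x : X, (α * β) • N' x + D (D' (N' x)) = x := by
    intro x
    have := congrArg (fun f : X →L[ℂ] X => f x) hN.1
    simpa [ContinuousLinearMap.mul_apply] using this
  have hND' : ∀ x : X, N' (D x) = D (M' x) := fun x => by
    have := congrArg (fun f : X →L[ℂ] X => f x) hND
    simpa [ContinuousLinearMap.mul_apply] using this
  have hMD' : ∀ x : X, M' (D' x) = D' (N' x) := fun x => by
    have := congrArg (fun f : X →L[ℂ] X => f x) hMD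
    simpa [ContinuousLinearMap.mul_apply] using this
  constructor
  · refine ContinuousLinearMap.ext fun p => ?_
    obtain ⟨y₁, y₂⟩ := p
    simp only [ContinuousLinearMap.comp_apply, ContinuousLinearMap.one_apply, hB, hA,
      map_add, map_smul, map_neg, smul_add, smul_neg, Prod.mk.injEq]
    constructor
    · rw [smul_smul]; conv_rhs => rw [← hM1 y₁]
      abel
    · rw [smul_smul, mul_comm β α]; conv_rhs => rw [← hN1 y₂]
      abel
  · refine ContinuousLinearMap.ext fun p => ?_
    obtain ⟨x₁, x₂⟩ := p
    simp only [ContinuousLinearMap.comp_apply, ContinuousLinearMap.one_apply, hA, hB,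
      map_add, map_smul, map_neg, map_sub, smul_add, smul_sub, smul_neg, hND', hMD',
      Prod.mk.injEq]
    constructor
    · rw [smul_smul, mul_comm β α]; conv_rhs => rw [← hM1 x₁]
      abel
    · rw [smul_smul]; conv_rhs => rw [← hN1 x₂]
      abel
end

section
/- Let X be a complex Hilbert space, D : X →L[ℂ] X bounded, and R, G : X →L[ℂ] X bounded self-adjoint operators with ⟨Gx, x⟩ ≥ 0 and ⟨Rx, x⟩ ≥ r₀‖x‖² for all x (for some r₀ > 0). If λ = r + iω with ω ≠ 0 is an eigenvalue of the block operator A = [[-G, -D*], [D, -R]] on X × X, then r ≤ -r₀/2. -/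
open ContinuousLinearMap Complex

local notation "⟪" x ", " y "⟫" => @inner ℂ _ _ x y

/-- Eigenvalues `λ = r + iω` with `ω ≠ 0` of `A = [[-G,-D*],[D,-R]]` satisfy `r ≤ -r₀/2`
when `G ≥ 0` and `R ≥ r₀ > 0`. -/
theorem stmt2 {X : Type*} [NormedAddCommGroup X] [InnerProductSpace ℂ X] [CompleteSpace X]
    (D G R : X →L[ℂ] X) (hG : IsSelfAdjoint G) (hR : IsSelfAdjoint R)
    (hGpos : ∀ x : X, 0 ≤ (⟪G x, x⟫).re)
    (r₀ : ℝ) (hr₀ : 0 < r₀)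
    (hRpos : ∀ x : X, r₀ * ‖x‖ ^ 2 ≤ (⟪R x, x⟫).re)
    (A : (X × X) →L[ℂ] (X × X))
    (hA : ∀ x₁ x₂ : X, A (x₁, x₂) =
      (-(G x₁) - (ContinuousLinearMap.adjoint D) x₂, D x₁ - R x₂))
    (r ω : ℝ) (hω : ω ≠ 0)
    (z : X × X) (hz : z ≠ 0) (heig : A z = ((r : ℂ) + (ω : ℂ) * Complex.I) • z) :
    r ≤ -r₀ / 2 := by
  obtain ⟨x₁, x₂⟩ := z
  rw [hA x₁ x₂, Prod.smul_mk, Prod.mk.injEq] at heig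
  obtain ⟨h1, h2⟩ := heig
  have hGr : (⟪G x₁, x₁⟫).im = 0 := by
    have h : ⟪G x₁, x₁⟫ = (starRingEnd ℂ) ⟪G x₁, x₁⟫ := by
      rw [inner_conj_symm]; exact hG.isSymmetric x₁ x₁
    exact Complex.conj_eq_iff_im.mp h.symm
  have hRr : (⟪R x₂, x₂⟫).im = 0 := by
    have h : ⟪R x₂, x₂⟫ = (starRingEnd ℂ) ⟪R x₂, x₂⟫ := by
      rw [inner_conj_symm]; exact hR.isSymmetric x₂ x₂
    exact Complex.conj_eq_iff_im.mp h.symm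
  -- inner product equations
  have e1 : -⟪G x₁, x₁⟫ - (starRingEnd ℂ) ⟪D x₁, x₂⟫
      = ((r : ℂ) - (ω : ℂ) * Complex.I) * ((‖x₁‖ ^ 2 : ℝ) : ℂ) := by
    have h := congrArg (fun y => ⟪y, x₁⟫) h1
    simp only [inner_sub_left, inner_neg_left, adjoint_inner_left, inner_smul_left,
      inner_self_eq_norm_sq_to_K, ← inner_conj_symm x₂ (D x₁)] at h
    rw [h]
    push_cast
    rw [map_add, map_mul, Complex.conj_ofReal, Complex.conj_ofReal, Complex.conj_I]
    norm_cast
    rw [mul_neg, ← sub_eq_add_neg]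
    norm_num [Complex.coe_algebraMap]
  have e2 : ⟪D x₁, x₂⟫ - ⟪R x₂, x₂⟫
      = ((r : ℂ) - (ω : ℂ) * Complex.I) * ((‖x₂‖ ^ 2 : ℝ) : ℂ) := by
    have h := congrArg (fun y => ⟪y, x₂⟫) h2
    simp only [inner_sub_left, inner_smul_left, inner_self_eq_norm_sq_to_K] at h
    rw [h]
    push_cast
    rw [map_add, map_mul, Complex.conj_ofReal, Complex.conj_ofReal, Complex.conj_I]
    norm_cast
    rw [mul_neg, ← sub_eq_add_neg]
    norm_num [Complex.coe_algebraMap]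
  -- split into real and imaginary parts
  have i1 := congrArg Complex.im e1
  have i2 := congrArg Complex.im e2
  have re1 := congrArg Complex.re e1
  have re2 := congrArg Complex.re e2
  simp only [Complex.sub_im, Complex.neg_im, Complex.conj_im, Complex.mul_im,
    Complex.sub_re, Complex.neg_re, Complex.conj_re, Complex.mul_re,
    Complex.ofReal_re, Complex.ofReal_im, Complex.I_re, Complex.I_im,
    hGr, hRr, mul_zero, mul_one, zero_mul, one_mul, sub_zero, zero_sub, add_zero,
    zero_add, neg_zero, neg_neg, mul_neg, neg_mul] at i1 i2 re1 re2
  -- x₁ and x₂ have equal norms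
  have hnn : ‖x₁‖ ^ 2 = ‖x₂‖ ^ 2 := by
    have h : ω * ‖x₁‖ ^ 2 = ω * ‖x₂‖ ^ 2 := by linarith
    exact mul_left_cancel₀ hω h
  have hx₂ : x₂ ≠ 0 := by
    intro h
    apply hz
    have h1 : ‖x₁‖ ^ 2 = 0 := by rw [hnn, h]; simp
    have hx₁ : x₁ = 0 := by
      have := pow_eq_zero_iff (n := 2) (by norm_num) |>.mp h1
      exact norm_eq_zero.mp this
    simp [hx₁, h]
  have hx₂pos : 0 < ‖x₂‖ ^ 2 := by
    have := norm_pos_iff.mpr hx₂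
    positivity
  have hGp := hGpos x₁
  have hRp := hRpos x₂
  nlinarith [re1, re2, hnn]
end

section
/- With the same setup (X complex Hilbert space, D bounded, G nonnegative bounded self-adjoint, R uniformly positive bounded self-adjoint), if A(x₁, x₂) = λ(x₁, x₂) with λ = r + iω, ω ≠ 0, and (x₁,x₂) ≠ 0, then ‖x₁‖ = ‖x₂‖. -/
open ContinuousLinearMap Complex

local notation "⟪" x ", " y "⟫" => @inner ℂ _ _ x y

/-- Imaginary part of ⟪x, T x⟫ vanishes for self-adjoint T. -/
lemma selfAdjoint_inner_im {X : Type*} [NormedAddCommGroup X] [InnerProductSpace ℂ X]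
    [CompleteSpace X] (T : X →L[ℂ] X) (hT : IsSelfAdjoint T) (x : X) :
    (⟪x, T x⟫).im = 0 := by
  have h : ⟪x, T x⟫ = ⟪T x, x⟫ := by
    conv_lhs => rw [← hT.adjoint_eq]
    rw [ContinuousLinearMap.adjoint_inner_right]
  have h2 : (starRingEnd ℂ) ⟪x, T x⟫ = ⟪x, T x⟫ := by
    rw [inner_conj_symm, h]
  have h3 := congrArg Complex.im h2
  rw [Complex.conj_im] at h3
  linarith

/-- Eigenvalues `λ = r + iω` with `ω ≠ 0` of `A = [[-G,-D*],[D,-R]]` have eigenvectors with components of equal norm. -/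
theorem stmt3 {X : Type*} [NormedAddCommGroup X] [InnerProductSpace ℂ X] [CompleteSpace X]
    (D G R : X →L[ℂ] X) (hG : IsSelfAdjoint G) (hR : IsSelfAdjoint R)
    (hGpos : ∀ x : X, 0 ≤ (⟪G x, x⟫).re)
    (r₀ : ℝ) (hr₀ : 0 < r₀)
    (hRpos : ∀ x : X, r₀ * ‖x‖ ^ 2 ≤ (⟪R x, x⟫).re)
    (A : (X × X) →L[ℂ] (X × X))
    (hA : ∀ x₁ x₂ : X, A (x₁, x₂) =
      (-(G x₁) - (ContinuousLinearMap.adjoint D) x₂, D x₁ - R x₂))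
    (r ω : ℝ) (hω : ω ≠ 0)
    (z : X × X) (hz : z ≠ 0) (heig : A z = ((r : ℂ) + (ω : ℂ) * Complex.I) • z) :
    ‖z.1‖ = ‖z.2‖ := by
  set lam : ℂ := (r : ℂ) + (ω : ℂ) * Complex.I with hlam
  have hz' : A (z.1, z.2) = lam • z := by simpa using heig
  rw [hA z.1 z.2] at hz'
  have h1 : -(G z.1) - (ContinuousLinearMap.adjoint D) z.2 = lam • z.1 :=
    congrArg Prod.fst hz'
  have h2 : D z.1 - R z.2 = lam • z.2 := congrArg Prod.snd hz'
  set c : ℂ := ⟪D z.1, z.2⟫ with hc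
  have e1 : ⟪z.1, -(G z.1) - (ContinuousLinearMap.adjoint D) z.2⟫ = lam * (‖z.1‖ : ℂ) ^ 2 := by
    rw [h1, inner_smul_right, inner_self_eq_norm_sq_to_K]; norm_cast
  have e1' : -(⟪z.1, G z.1⟫) - c = lam * (‖z.1‖ : ℂ) ^ 2 := by
    rw [← e1, inner_sub_right, inner_neg_right, ContinuousLinearMap.adjoint_inner_right]
  have e2 : ⟪z.2, D z.1 - R z.2⟫ = lam * (‖z.2‖ : ℂ) ^ 2 := by
    rw [h2, inner_smul_right, inner_self_eq_norm_sq_to_K]; norm_cast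
  have e2' : (starRingEnd ℂ) c - ⟪z.2, R z.2⟫ = lam * (‖z.2‖ : ℂ) ^ 2 := by
    rw [← e2, inner_sub_right, ← inner_conj_symm z.2 (D z.1)]
  have hGim := selfAdjoint_inner_im G hG z.1
  have hRim := selfAdjoint_inner_im R hR z.2
  have im1 := congrArg Complex.im e1'
  have im2 := congrArg Complex.im e2'
  simp [Complex.sub_im, Complex.neg_im, Complex.conj_im, hGim, hRim, hlam,
    Complex.add_im, Complex.mul_im, Complex.ofReal_im, Complex.ofReal_re,
    ← Complex.ofReal_pow] at im1 im2
  have hsq : ω * ‖z.1‖ ^ 2 = ω * ‖z.2‖ ^ 2 := by linarith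
  have hn : ‖z.1‖ ^ 2 = ‖z.2‖ ^ 2 := mul_left_cancel₀ hω hsq
  rw [← Real.sqrt_sq (norm_nonneg z.1), ← Real.sqrt_sq (norm_nonneg z.2), hn]
end

section
/- Let X be a complex Hilbert space, D : X →L[ℂ] X bounded, G, R bounded self-adjoint with ⟨Gx,x⟩ ≥ 0 for all x and R uniformly positive (⟨Rx,x⟩ ≥ r₀‖x‖² for some r₀ > 0, all x). Then the kernel of A = [[-G, -D*], [D, -R]] equals (ker G ∩ ker D) × {0}. -/
open ContinuousLinearMap

local notation "⟪" x ", " y "⟫" => @inner ℂ _ _ x y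

/-!
Pairing `A (x₁, x₂)` with `(x₁, x₂)`, the off-diagonal blocks `D` and `-D*` cancel in the real
part, so `A (x₁, x₂) = 0` forces `Re ⟪G x₁, x₁⟫ + Re ⟪R x₂, x₂⟫ = 0`. Both terms are nonnegative
and the second dominates `r₀ ‖x₂‖²`, hence `x₂ = 0`; the two block rows then read `G x₁ = 0`
and `D x₁ = 0`.
-/

section BlockOperator

variable {𝕜 E F : Type*} [RCLike 𝕜]
  [NormedAddCommGroup E] [InnerProductSpace 𝕜 E] [NormedAddCommGroup F] [InnerProductSpace 𝕜 F]

theorem eq_zero_of_coercive_of_re_inner_nonpos {R : F →L[𝕜] F} {r₀ : ℝ} (hr₀ : 0 < r₀)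
    (hR : ∀ y, r₀ * ‖y‖ ^ 2 ≤ RCLike.re (inner 𝕜 (R y) y)) {y : F}
    (hy : RCLike.re (inner 𝕜 (R y) y) ≤ 0) : y = 0 := by
  have hnorm : ‖y‖ ^ 2 ≤ 0 := by nlinarith [hR y]
  exact norm_eq_zero.mp (pow_eq_zero_iff two_ne_zero |>.mp (le_antisymm hnorm (sq_nonneg _)))

variable [CompleteSpace E] [CompleteSpace F]

theorem re_inner_adjoint_apply_left (D : E →L[𝕜] F) (x : E) (y : F) :
    RCLike.re (inner 𝕜 (adjoint D y) x) = RCLike.re (inner 𝕜 (D x) y) := by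
  rw [adjoint_inner_left, ← inner_conj_symm, RCLike.conj_re]

theorem block_apply_eq_zero_iff {D : E →L[𝕜] F} {G : E →L[𝕜] E} {R : F →L[𝕜] F}
    (hG : ∀ x, 0 ≤ RCLike.re (inner 𝕜 (G x) x)) {r₀ : ℝ} (hr₀ : 0 < r₀)
    (hR : ∀ y, r₀ * ‖y‖ ^ 2 ≤ RCLike.re (inner 𝕜 (R y) y)) (x : E) (y : F) :
    (-G x - adjoint D y = 0 ∧ D x - R y = 0) ↔ (G x = 0 ∧ D x = 0) ∧ y = 0 := by
  constructor
  · rintro ⟨hrow₁, hrow₂⟩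
    have hGx : G x = -adjoint D y := by rwa [sub_eq_zero, neg_eq_iff_eq_neg] at hrow₁
    have hDx : D x = R y := sub_eq_zero.mp hrow₂
    have hbalance : RCLike.re (inner 𝕜 (G x) x) = -RCLike.re (inner 𝕜 (R y) y) := by
      rw [hGx, inner_neg_left, map_neg, re_inner_adjoint_apply_left, hDx]
    obtain rfl : y = 0 :=
      eq_zero_of_coercive_of_re_inner_nonpos hr₀ hR (by linarith [hG x])
    simp only [map_zero, neg_zero] at hGx hDx
    exact ⟨⟨hGx, hDx⟩, rfl⟩
  · rintro ⟨⟨hGx, hDx⟩, rfl⟩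
    simp [hGx, hDx]

end BlockOperator

theorem stmt4_general {X : Type*} [NormedAddCommGroup X] [InnerProductSpace ℂ X] [CompleteSpace X]
    (D G R : X →L[ℂ] X)
    (hGpos : ∀ x : X, 0 ≤ (⟪G x, x⟫).re)
    (r₀ : ℝ) (hr₀ : 0 < r₀)
    (hRpos : ∀ x : X, r₀ * ‖x‖ ^ 2 ≤ (⟪R x, x⟫).re)
    (A : (X × X) →L[ℂ] (X × X))
    (hA : ∀ x₁ x₂ : X, A (x₁, x₂) =
      (-(G x₁) - (ContinuousLinearMap.adjoint D) x₂, D x₁ - R x₂)) :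
    LinearMap.ker (A : (X × X) →ₗ[ℂ] (X × X)) = (LinearMap.ker (G : X →ₗ[ℂ] X) ⊓ LinearMap.ker (D : X →ₗ[ℂ] X)).prod ⊥ := by
  ext ⟨x₁, x₂⟩
  simp only [LinearMap.mem_ker, ContinuousLinearMap.coe_coe, Submodule.mem_prod,
    Submodule.mem_inf, Submodule.mem_bot, hA, Prod.mk_eq_zero]
  exact block_apply_eq_zero_iff hGpos hr₀ hRpos x₁ x₂

/-- `ker A = (ker G ∩ ker D) × {0}` for `A = [[-G,-D*],[D,-R]]` with `G ≥ 0` and `R`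
uniformly positive. -/
theorem stmt4 {X : Type*} [NormedAddCommGroup X] [InnerProductSpace ℂ X] [CompleteSpace X]
    (D G R : X →L[ℂ] X) (hG : IsSelfAdjoint G) (hR : IsSelfAdjoint R)
    (hGpos : ∀ x : X, 0 ≤ (⟪G x, x⟫).re)
    (r₀ : ℝ) (hr₀ : 0 < r₀)
    (hRpos : ∀ x : X, r₀ * ‖x‖ ^ 2 ≤ (⟪R x, x⟫).re)
    (A : (X × X) →L[ℂ] (X × X))
    (hA : ∀ x₁ x₂ : X, A (x₁, x₂) =
      (-(G x₁) - (ContinuousLinearMap.adjoint D) x₂, D x₁ - R x₂)) :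
    LinearMap.ker (A : (X × X) →ₗ[ℂ] (X × X)) = (LinearMap.ker (G : X →ₗ[ℂ] X) ⊓ LinearMap.ker (D : X →ₗ[ℂ] X)).prod ⊥ :=
  stmt4_general D G R hGpos r₀ hr₀ hRpos A hA
end

section
/- Let X be a complex Hilbert space, let D : X →L[ℂ] X be bounded, let r₀ > 0 and consider A = [[0, -D*], [D, -r₀·I]]. If D* is onto, then 0 is in the resolvent set of A, i.e., A is bijective. -/
open ContinuousLinearMap

local notation "⟪" x ", " y "⟫" => @inner ℂ _ _ x y

/-- If `D*` is onto, then `A = [[0,-D*],[D,-r₀]]` is bijective, i.e. `0 ∈ ρ(A)`. -/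
theorem stmt7 {X : Type*} [NormedAddCommGroup X] [InnerProductSpace ℂ X] [CompleteSpace X]
    (D : X →L[ℂ] X) (hD : Function.Surjective (ContinuousLinearMap.adjoint D))
    (r₀ : ℝ) (hr₀ : 0 < r₀)
    (A : (X × X) →L[ℂ] (X × X))
    (hA : ∀ x₁ x₂ : X, A (x₁, x₂) =
      (-(ContinuousLinearMap.adjoint D) x₂, D x₁ - (r₀ : ℂ) • x₂)) :
    Function.Bijective A := by
  have hr₀C : (r₀ : ℂ) ≠ 0 := by
    exact_mod_cast (ne_of_gt hr₀)
  -- D is injective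
  have hDinj : Function.Injective D := by
    rw [injective_iff_map_eq_zero]
    intro a ha
    obtain ⟨u, hu⟩ := hD a
    have h1 : ⟪a, a⟫ = 0 := by
      calc ⟪a, a⟫ = ⟪(ContinuousLinearMap.adjoint D) u, a⟫ := by rw [hu]
        _ = ⟪u, D a⟫ := ContinuousLinearMap.adjoint_inner_left D a u
        _ = 0 := by rw [ha, inner_zero_right]
    exact inner_self_eq_zero.mp h1
  -- D is bounded below
  obtain ⟨C, hCpos, hC⟩ := (ContinuousLinearMap.adjoint D).exists_preimage_norm_le hD
  have hbelow : ∀ x : X, ‖x‖ ≤ C * ‖D x‖ := by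
    intro x
    obtain ⟨u, hu, hnu⟩ := hC x
    have h1 : ⟪x, x⟫ = ⟪u, D x⟫ := by
      rw [← hu, ContinuousLinearMap.adjoint_inner_left]
    have h2 : ‖x‖ * ‖x‖ ≤ (C * ‖x‖) * ‖D x‖ := by
      calc ‖x‖ * ‖x‖ = ‖⟪x, x⟫‖ := by
            rw [@inner_self_eq_norm_sq_to_K ℂ]
            simp [pow_two]
        _ = ‖⟪u, D x⟫‖ := by rw [h1]
        _ ≤ ‖u‖ * ‖D x‖ := norm_inner_le_norm u (D x)
        _ ≤ (C * ‖x‖) * ‖D x‖ := by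
            apply mul_le_mul_of_nonneg_right hnu (norm_nonneg _)
    rcases eq_or_lt_of_le (norm_nonneg x) with h | h
    · rw [← h]; positivity
    · have := le_of_mul_le_mul_right (by linarith [h2] : ‖x‖ * ‖x‖ ≤ C * ‖D x‖ * ‖x‖) h
      exact this
  -- range of D is closed
  have hanti : AntilipschitzWith (⟨C, le_of_lt hCpos⟩ : NNReal) D :=
    D.antilipschitz_of_bound hbelow
  have hclosed : IsClosed (Set.range D) :=
    hanti.isClosed_range D.uniformContinuous
  have hclosed' : IsClosed ((LinearMap.range (D : X →ₗ[ℂ] X) : Submodule ℂ X) : Set X) := by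
    rwa [LinearMap.coe_range]
  haveI : CompleteSpace (LinearMap.range (D : X →ₗ[ℂ] X) : Submodule ℂ X) :=
    hclosed'.completeSpace_coe
  constructor
  · -- injective
    rw [injective_iff_map_eq_zero]
    rintro ⟨x₁, x₂⟩ hx
    rw [hA x₁ x₂, Prod.mk_eq_zero] at hx
    obtain ⟨h1, h2⟩ := hx
    have hDx2 : (ContinuousLinearMap.adjoint D) x₂ = 0 := by
      have := h1; rwa [neg_eq_zero] at this
    have hx2 : x₂ = 0 := by
      have hD1 : D x₁ = (r₀ : ℂ) • x₂ := by
        rwa [sub_eq_zero] at h2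
      have h3 : (r₀ : ℂ) * ⟪x₂, x₂⟫ = 0 := by
        calc (r₀ : ℂ) * ⟪x₂, x₂⟫ = ⟪x₂, (r₀ : ℂ) • x₂⟫ := by
              rw [inner_smul_right]
          _ = ⟪x₂, D x₁⟫ := by rw [hD1]
          _ = ⟪(ContinuousLinearMap.adjoint D) x₂, x₁⟫ := by
              rw [ContinuousLinearMap.adjoint_inner_left]
          _ = 0 := by rw [hDx2, inner_zero_left]
      have := mul_eq_zero.mp h3
      rcases this with h | h
      · exact absurd h hr₀C
      · exact inner_self_eq_zero.mp h
    have hx1 : x₁ = 0 := by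
      apply hDinj
      rw [map_zero]
      rw [hx2, smul_zero] at h2
      rwa [sub_zero] at h2
    rw [hx1, hx2]; rfl
  · -- surjective
    rintro ⟨y₁, y₂⟩
    obtain ⟨w, hw⟩ := hD ((ContinuousLinearMap.adjoint D) y₂ - (r₀ : ℂ) • y₁)
    obtain ⟨p, hp, q, hq, hpq⟩ :=
      (LinearMap.range (D : X →ₗ[ℂ] X) : Submodule ℂ X).exists_add_mem_mem_orthogonal w
    obtain ⟨x₁, hx₁⟩ := hp
    -- D* q = 0
    have hDq : (ContinuousLinearMap.adjoint D) q = 0 := by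
      apply ext_inner_right ℂ
      intro v
      rw [ContinuousLinearMap.adjoint_inner_left, inner_zero_left]
      rw [← inner_conj_symm]
      have : ⟪D v, q⟫ = 0 :=
        (Submodule.mem_orthogonal _ q).mp hq (D v) ⟨v, rfl⟩
      rw [this, map_zero]
    have key : (ContinuousLinearMap.adjoint D) (D x₁) =
        (ContinuousLinearMap.adjoint D) y₂ - (r₀ : ℂ) • y₁ := by
      rw [show D x₁ = p from hx₁]
      have hpw : p = w - q := by rw [hpq]; abel
      rw [hpw, map_sub, hDq, sub_zero, hw]
    refine ⟨(x₁, (r₀ : ℂ)⁻¹ • (D x₁ - y₂)), ?_⟩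
    rw [hA]
    refine Prod.ext ?_ ?_
    · show -(ContinuousLinearMap.adjoint D) ((r₀ : ℂ)⁻¹ • (D x₁ - y₂)) = y₁
      rw [map_smul, map_sub, key]
      rw [sub_sub_cancel_left]
      rw [smul_neg, neg_neg, smul_smul, inv_mul_cancel₀ hr₀C, one_smul]
    · show D x₁ - (r₀ : ℂ) • ((r₀ : ℂ)⁻¹ • (D x₁ - y₂)) = y₂
      rw [smul_smul, mul_inv_cancel₀ hr₀C, one_smul, sub_sub_cancel]
end

section
/- Let X be a complex Hilbert space, D : X →L[ℂ] X bounded, r₀ > 0, and β ∈ ℝ with β ≠ 0. Then iβ lies in the resolvent set of A = [[0, -D*], [D, -r₀·I]], i.e., A - iβ·I is boundedly invertible on X × X. -/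
open ContinuousLinearMap

/-- For real `β ≠ 0` and `r₀ > 0`, `iβ` lies in the resolvent set of
`A = [[0,-D*],[D,-r₀]]`, i.e. `A - iβ·I` is boundedly invertible on `X × X`. -/
theorem stmt8 {X : Type*} [NormedAddCommGroup X] [InnerProductSpace ℂ X] [CompleteSpace X]
    (D : X →L[ℂ] X) (r₀ : ℝ) (hr₀ : 0 < r₀) (β : ℝ) (hβ : β ≠ 0)
    (A : (X × X) →L[ℂ] (X × X))
    (hA : ∀ x₁ x₂ : X, A (x₁, x₂) =
      (-(ContinuousLinearMap.adjoint D) x₂, D x₁ - (r₀ : ℂ) • x₂)) :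
    IsUnit (A - ((β : ℂ) * Complex.I) • (1 : (X × X) →L[ℂ] (X × X))) := by
  set z : ℂ := (β : ℂ) * Complex.I with hz
  have hzim : z.im = β := by simp [hz]
  have hzre : z.re = 0 := by simp [hz]
  set d : ℂ := (r₀ : ℂ) + z with hd
  have hd0 : d ≠ 0 := by
    intro h
    have := congrArg Complex.im h
    simp [hd, hzim] at this
    exact hβ this
  set c : ℂ := z * d with hc
  have hcim : c.im ≠ 0 := by
    have h1 : c.im = β * r₀ := by
      rw [hc, Complex.mul_im, hzre, hzim]
      simp [hd, hzim, hzre]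
    rw [h1]
    positivity
  have hsa : IsSelfAdjoint (star D * D) := IsSelfAdjoint.star_mul_self D
  have hmem : (-c) ∉ spectrum ℂ (star D * D) := by
    intro h
    have h2 := hsa.mem_spectrum_eq_re h
    have := congrArg Complex.im h2
    simp at this
    exact hcim this
  have hTu : IsUnit (star D * D + c • (1 : X →L[ℂ] X)) := by
    have h1 := spectrum.notMem_iff.mp hmem
    have h2 : IsUnit (-(algebraMap ℂ (X →L[ℂ] X) (-c) - star D * D)) := h1.neg
    convert h2 using 1
    rw [map_neg, Algebra.algebraMap_eq_smul_one, neg_sub, sub_neg_eq_add]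
  obtain ⟨u, hu⟩ := hTu
  set T : X →L[ℂ] X := star D * D + c • (1 : X →L[ℂ] X) with hT
  set Ti : X →L[ℂ] X := (↑u⁻¹ : X →L[ℂ] X) with hTi
  have hTi1 : ∀ x, T (Ti x) = x := by
    intro x
    have h : T * Ti = 1 := by rw [← hu]; exact u.mul_inv
    have := congrArg (fun f => f x) h
    simpa [ContinuousLinearMap.mul_apply] using this
  have hTi2 : ∀ x, Ti (T x) = x := by
    intro x
    have h : Ti * T = 1 := by rw [← hu]; exact u.inv_mul
    have := congrArg (fun f => f x) h
    simpa [ContinuousLinearMap.mul_apply] using this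
  have hTapp : ∀ x : X, T x = star D (D x) + c • x := by
    intro x; simp [hT, ContinuousLinearMap.mul_apply]
  set L1 : (X × X) →L[ℂ] X :=
    Ti ∘L ((-d) • ContinuousLinearMap.fst ℂ X X + (star D) ∘L ContinuousLinearMap.snd ℂ X X)
    with hL1
  set L2 : (X × X) →L[ℂ] X := d⁻¹ • (D ∘L L1 - ContinuousLinearMap.snd ℂ X X) with hL2
  have hL1app : ∀ y₁ y₂ : X, L1 (y₁, y₂) = Ti ((-d) • y₁ + star D y₂) := by
    intro y₁ y₂; simp [hL1]
  have hL2app : ∀ y₁ y₂ : X, L2 (y₁, y₂) = d⁻¹ • (D (L1 (y₁, y₂)) - y₂) := by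
    intro y₁ y₂; simp [hL2]
  have hstar : (ContinuousLinearMap.adjoint D : X →L[ℂ] X) = star D := (star_eq_adjoint D).symm
  refine isUnit_iff_exists.mpr ⟨L1.prod L2, ?_, ?_⟩
  · apply ContinuousLinearMap.ext
    rintro ⟨y₁, y₂⟩
    have hw := hTi1 ((-d) • y₁ + star D y₂)
    set w : X := Ti ((-d) • y₁ + star D y₂) with hwdef
    have hDDw : star D (D w) = (-d) • y₁ + star D y₂ - c • w := by
      rw [hTapp] at hw
      exact eq_sub_of_add_eq hw
    have hB : (L1.prod L2) (y₁, y₂) = (w, d⁻¹ • (D w - y₂)) := by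
      simp [ContinuousLinearMap.prod_apply, hL1app, hL2app, hwdef]
    simp only [ContinuousLinearMap.mul_apply, ContinuousLinearMap.one_apply, hB,
      ContinuousLinearMap.sub_apply, ContinuousLinearMap.smul_apply,
      ContinuousLinearMap.one_apply, hA, hstar]
    refine Prod.ext ?_ ?_
    · show -(star D (d⁻¹ • (D w - y₂))) - z • w = y₁
      rw [map_smul, map_sub, hDDw]
      have h2 : d⁻¹ * c = z := by
        rw [hc, mul_comm z d, ← mul_assoc, inv_mul_cancel₀ hd0, one_mul]
      rw [smul_sub, smul_sub, smul_add, smul_smul, smul_smul, h2,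
        mul_neg, inv_mul_cancel₀ hd0]
      module
    · show D w - (r₀ : ℂ) • (d⁻¹ • (D w - y₂)) - z • (d⁻¹ • (D w - y₂)) = y₂
      rw [smul_smul, smul_smul, sub_sub, ← add_smul]
      have h3 : (r₀ : ℂ) * d⁻¹ + z * d⁻¹ = 1 := by
        rw [← add_mul, ← hd, mul_inv_cancel₀ hd0]
      rw [h3, one_smul]
      abel
  · apply ContinuousLinearMap.ext
    rintro ⟨x₁, x₂⟩
    have hMx : (A - z • (1 : (X × X) →L[ℂ] (X × X))) (x₁, x₂) =
        (-(star D x₂) - z • x₁, D x₁ - d • x₂) := by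
      simp [hA, hstar, hd, Prod.smul_mk, add_smul]
      rw [sub_sub]
    simp only [ContinuousLinearMap.mul_apply, hMx, ContinuousLinearMap.one_apply]
    have harg : (-d) • (-(star D x₂) - z • x₁) + star D (D x₁ - d • x₂) = T x₁ := by
      rw [map_sub, map_smul, hTapp, hc]
      module
    refine Prod.ext ?_ ?_
    · show L1 _ = x₁
      rw [hL1app, harg, hTi2]
    · show L2 _ = x₂
      rw [hL2app, hL1app, harg, hTi2]
      rw [sub_sub_cancel, smul_smul, inv_mul_cancel₀ hd0, one_smul]
end

section
/- Let X be a complex Hilbert space, A a bounded operator on X × X of the form A = [[-G, -D*], [D, -R]] with D bounded, G, R bounded self-adjoint nonnegative, and H a bounded self-adjoint operator on X × X with ⟨Hz, z⟩ ≥ m‖z‖² for some m > 0. If there exists a bounded nonnegative self-adjoint P with Re⟨Az, Pz⟩ ≤ -½‖z‖² for all z, then P̂ := ‖H⁻¹‖³ · H P H satisfies Re⟨AHw, P̂w⟩_{H⁻¹} ≤ -½⟨w, w⟩_{H⁻¹} for all w, where ⟨v,w⟩_{H⁻¹} := ⟨H⁻¹v, w⟩. -/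
open ContinuousLinearMap

local notation "⟪" x ", " y "⟫" => @inner ℂ _ _ x y

/-- Transfer of a strict Lyapunov inequality from `A` to `AH` in the `H⁻¹`-weighted
inner product `⟨v,w⟩_{H⁻¹} = ⟨H⁻¹v, w⟩`, with `P̂ = ‖H⁻¹‖³·HPH`. -/
theorem stmt11 {X : Type*} [NormedAddCommGroup X] [InnerProductSpace ℂ X] [CompleteSpace X]
    (D G R : X →L[ℂ] X) (hG : IsSelfAdjoint G) (hR : IsSelfAdjoint R)
    (hGpos : ∀ x : X, 0 ≤ (⟪G x, x⟫).re)
    (hRpos : ∀ x : X, 0 ≤ (⟪R x, x⟫).re)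
    (A : WithLp 2 (X × X) →L[ℂ] WithLp 2 (X × X))
    (hA : ∀ x₁ x₂ : X, A ((WithLp.equiv 2 (X × X)).symm (x₁, x₂)) =
      (WithLp.equiv 2 (X × X)).symm
        (-(G x₁) - (ContinuousLinearMap.adjoint D) x₂, D x₁ - R x₂))
    (H : WithLp 2 (X × X) →L[ℂ] WithLp 2 (X × X)) (hH : IsSelfAdjoint H)
    (m : ℝ) (hm : 0 < m)
    (hHpos : ∀ z : WithLp 2 (X × X), m * ‖z‖ ^ 2 ≤ (⟪H z, z⟫).re)
    (Hinv : WithLp 2 (X × X) →L[ℂ] WithLp 2 (X × X))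
    (hHinv₁ : H ∘L Hinv = 1) (hHinv₂ : Hinv ∘L H = 1)
    (P : WithLp 2 (X × X) →L[ℂ] WithLp 2 (X × X)) (hP : IsSelfAdjoint P)
    (hPpos : ∀ z : WithLp 2 (X × X), 0 ≤ (⟪P z, z⟫).re)
    (hLyap : ∀ z : WithLp 2 (X × X), (⟪A z, P z⟫).re ≤ -(1 / 2) * ‖z‖ ^ 2) :
    ∀ w : WithLp 2 (X × X),
      (⟪Hinv (A (H w)), ((‖Hinv‖ ^ 3 : ℝ) • (H ∘L P ∘L H)) w⟫).re ≤
        -(1 / 2) * (⟪Hinv w, w⟫).re := by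
  intro w
  set c : ℝ := ‖Hinv‖ ^ 3 with hc
  have hc0 : (0:ℝ) ≤ c := by positivity
  have hHH : ∀ z, H (Hinv z) = z := fun z => by
    have := congrArg (fun T => T z) hHinv₁
    simpa using this
  have hadj : ContinuousLinearMap.adjoint H = H := hH
  have key : (⟪Hinv (A (H w)), (c • (H ∘L P ∘L H)) w⟫).re
      = c * (⟪A (H w), P (H w)⟫).re := by
    have h1 : (c • (H ∘L P ∘L H)) w = (c : ℂ) • (H (P (H w))) := by
      simp [Complex.real_smul]
    rw [h1, inner_smul_right]
    have h2 : ⟪Hinv (A (H w)), H (P (H w))⟫ = ⟪A (H w), P (H w)⟫ := by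
      rw [← hadj, ContinuousLinearMap.adjoint_inner_right, hadj, hHH]
    rw [h2]
    simp
  rw [key]
  have h3 : (⟪A (H w), P (H w)⟫).re ≤ -(1/2) * ‖H w‖ ^ 2 := hLyap (H w)
  have h4 : (⟪Hinv w, w⟫).re ≤ c * ‖H w‖ ^ 2 := by
    have e1 : (⟪Hinv w, w⟫).re ≤ ‖Hinv w‖ * ‖w‖ := by
      simpa using re_inner_le_norm (𝕜 := ℂ) (Hinv w) w
    have e2 : ‖Hinv w‖ ≤ ‖Hinv‖ * ‖w‖ := Hinv.le_opNorm w
    have e3 : ‖w‖ ≤ ‖Hinv‖ * ‖H w‖ := by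
      have := Hinv.le_opNorm (H w)
      rwa [show Hinv (H w) = w from by
        have := congrArg (fun T => T w) hHinv₂; simpa using this] at this
    have hn0 : (0:ℝ) ≤ ‖w‖ := norm_nonneg _
    have hn1 : (0:ℝ) ≤ ‖Hinv‖ := norm_nonneg _
    have hn2 : (0:ℝ) ≤ ‖H w‖ := norm_nonneg _
    calc (⟪Hinv w, w⟫).re ≤ ‖Hinv w‖ * ‖w‖ := e1
      _ ≤ (‖Hinv‖ * ‖w‖) * ‖w‖ := by nlinarith
      _ ≤ ‖Hinv‖ * (‖Hinv‖ * ‖H w‖) * (‖Hinv‖ * ‖H w‖) := by nlinarith [mul_self_le_mul_self hn0 e3]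
      _ = c * ‖H w‖ ^ 2 := by rw [hc]; ring
  nlinarith [mul_le_mul_of_nonneg_left h3 hc0]
end
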